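/- For any a ∈ ℂ and any functions φ₁, φ₂ : ℕ → {+,−} with φ₁ ≠ φ₂, the φ₁-Verma module M_{φ₁}(a) and the φ₂-Verma module M_{φ₂}(a) are not isomorphic as L-modules. -/

import Mathlib

/-!
Fix `k` with `φ₁ k ≠ φ₂ k` and let `u = x_{ε,1}` with `ε = ±k` chosen so that `u ∈ L_{φ₁}^+` and
`u ∈ L_{φ₂}^-`. Since `[L, L] ⊆ ℂc` is central, `u` commutes with `[u, y]` in `U(L)`, whence
`u^(n+1) y = y u^(n+1) + (n+1) [u, y] u^n`. So the set of vectors killed by a power of `u` is a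
`U(L)`-submodule; in `M_{φ₁}(a)` it contains the generator `v`, hence `u` is locally nilpotent.
In `M_{φ₂}(a)`, on the other hand, `u^n v ≠ 0` for all `n`: the Fock representation of `L` on
polynomials, in which `L_{φ₂}^-` acts by multiplication by variables and `L_{φ₂}^+` by derivations,
satisfies the defining relations of `M_{φ₂}(a)` at `1` and sends `u^n` to `X^n`. Local nilpotence
of `u` is invariant under isomorphism.
-/

open UniversalEnvelopingAlgebra

/-- The Heisenberg Lie algebra `L` with basis `{c} ∪ {x_{k,i} : k ∈ ℤ∖{0}, 1 ≤ i ≤ d |k|}`,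
`c` central, and `[x_{k,i}, x_{l,j}] = δ_{k,-l} δ_{i,j} k c`. -/
structure HeisenbergL (d : ℕ → ℕ) (L : Type) [LieRing L] [LieAlgebra ℂ L] : Type where
  c : L
  x : ℤ → ℕ → L
  basis : Module.Basis (Option {p : ℤ × ℕ // p.1 ≠ 0 ∧ 1 ≤ p.2 ∧ p.2 ≤ d p.1.natAbs}) ℂ L
  basis_none : basis none = c
  basis_some : ∀ p, basis (some p) = x p.1.1 p.1.2
  lie_c : ∀ y : L, ⁅c, y⁆ = 0
  lie_x_x : ∀ k l i j, k ≠ 0 → l ≠ 0 → 1 ≤ i → i ≤ d k.natAbs → 1 ≤ j → j ≤ d l.natAbs →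
    ⁅x k i, x l j⁆ = if k = -l ∧ i = j then (k : ℂ) • c else 0

-- Signs `+`/`-` are encoded as `true`/`false`, and the paper's `ℕ` is the positive integers.
/-- The index set of the basis vectors `x_{k,i}` spanning `L_φ^+`:
`x_{k,i}` with `k > 0` and `φ k = +`, together with `x_{-k,i}` with `k > 0` and `φ k = -`. -/
def posIdx (d : ℕ → ℕ) (φ : ℕ → Bool) : Set (ℤ × ℕ) :=
  {p | p.1 ≠ 0 ∧ 1 ≤ p.2 ∧ p.2 ≤ d p.1.natAbs ∧
    ((0 < p.1 ∧ φ p.1.natAbs = true) ∨ (p.1 < 0 ∧ φ p.1.natAbs = false))}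

variable {d : ℕ → ℕ} {L : Type} [LieRing L] [LieAlgebra ℂ L]

/-- The left ideal of `U(L)` by which one quotients to obtain the induced module
`M_φ(a) = U(L) ⊗_{U(ℂc ⊕ L_φ^+)} ℂv`: it is generated by `c - a·1` and `L_φ^+`. -/
def vermaIdeal (E : HeisenbergL d L) (φ : ℕ → Bool) (a : ℂ) :
    Submodule (UniversalEnvelopingAlgebra ℂ L) (UniversalEnvelopingAlgebra ℂ L) :=
  Submodule.span (UniversalEnvelopingAlgebra ℂ L)
    ({ι ℂ E.c - algebraMap ℂ (UniversalEnvelopingAlgebra ℂ L) a} ∪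
      ((fun p : ℤ × ℕ => ι ℂ (E.x p.1 p.2)) '' posIdx d φ))

/-- The φ-Verma module `M_φ(a)`, realized as `U(L)/U(L)·⟨c - a, L_φ^+⟩`. -/
def VermaMod (E : HeisenbergL d L) (φ : ℕ → Bool) (a : ℂ) :=
  UniversalEnvelopingAlgebra ℂ L ⧸ vermaIdeal E φ a

instance (E : HeisenbergL d L) (φ : ℕ → Bool) (a : ℂ) : AddCommGroup (VermaMod E φ a) :=
  inferInstanceAs (AddCommGroup (UniversalEnvelopingAlgebra ℂ L ⧸ vermaIdeal E φ a))

instance (E : HeisenbergL d L) (φ : ℕ → Bool) (a : ℂ) :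
    Module (UniversalEnvelopingAlgebra ℂ L) (VermaMod E φ a) :=
  inferInstanceAs (Module (UniversalEnvelopingAlgebra ℂ L)
    (UniversalEnvelopingAlgebra ℂ L ⧸ vermaIdeal E φ a))

attribute [local instance] LieRing.ofAssociativeRing

section UniversalEnvelopingAlgebra

variable {R L : Type*} [CommRing R] [LieRing L] [LieAlgebra R L]

@[elab_as_elim]
theorem UniversalEnvelopingAlgebra.induction {C : UniversalEnvelopingAlgebra R L → Prop}
    (algebraMap : ∀ r, C (algebraMap R (UniversalEnvelopingAlgebra R L) r))
    (ι : ∀ x, C (ι R x))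
    (mul : ∀ a b, C a → C b → C (a * b))
    (add : ∀ a b, C a → C b → C (a + b))
    (u : UniversalEnvelopingAlgebra R L) : C u := by
  obtain ⟨t, rfl⟩ : ∃ t, mkAlgHom R L t = u := RingCon.mkₐ_surjective _ u
  induction t using TensorAlgebra.induction with
  | algebraMap r => simpa only [AlgHom.commutes] using algebraMap r
  | ι x => exact ι x
  | mul a b ha hb => simpa only [map_mul] using mul _ _ ha hb
  | add a b ha hb => simpa only [map_add] using add _ _ ha hb

theorem pow_succ_mul_of_commute_lie {A : Type*} [Ring A] {u y : A} (h : Commute u ⁅u, y⁆)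
    (n : ℕ) : u ^ (n + 1) * y = y * u ^ (n + 1) + (n + 1) • (⁅u, y⁆ * u ^ n) := by
  induction n with
  | zero => simp [Ring.lie_def]
  | succ n ih =>
    calc u ^ (n + 2) * y = u * (u ^ (n + 1) * y) := by rw [← mul_assoc, ← pow_succ']
      _ = (u * y) * u ^ (n + 1) + (n + 1) • (⁅u, y⁆ * (u * u ^ n)) := by
          rw [ih, mul_add, mul_smul_comm, ← mul_assoc, ← mul_assoc, h.eq, mul_assoc, mul_assoc]
      _ = y * u ^ (n + 2) + (n + 2) • (⁅u, y⁆ * u ^ (n + 1)) := by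
          rw [Ring.lie_def]; simp only [pow_succ', add_smul, sub_mul, one_smul, mul_assoc]; abel

theorem UniversalEnvelopingAlgebra.exists_pow_smul_eq_zero_smul {M : Type*} [AddCommGroup M]
    [Module (UniversalEnvelopingAlgebra R L) M] {x : L} (hx : ∀ y : L, ⁅x, ⁅x, y⁆⁆ = 0)
    (w : UniversalEnvelopingAlgebra R L) {m : M} (hm : ∃ n, ι R x ^ n • m = 0) :
    ∃ n, ι R x ^ n • w • m = 0 := by
  have pow_add_smul : ∀ {k n : ℕ} {m : M}, ι R x ^ n • m = 0 → ι R x ^ (k + n) • m = 0 :=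
    fun h ↦ by rw [pow_add, mul_smul, h, smul_zero]
  induction w using UniversalEnvelopingAlgebra.induction generalizing m with
  | algebraMap r =>
    obtain ⟨n, hn⟩ := hm
    exact ⟨n, by rw [smul_smul, ← Algebra.commutes, mul_smul, hn, smul_zero]⟩
  | ι y =>
    obtain ⟨n, hn⟩ := hm
    have hcomm : Commute (ι R x) ⁅ι R x, ι R y⁆ := by
      rw [← LieHom.map_lie, Commute, SemiconjBy, ← sub_eq_zero, ← Ring.lie_def,
        ← LieHom.map_lie, hx, map_zero]
    refine ⟨n + 1, ?_⟩
    rw [smul_smul, pow_succ_mul_of_commute_lie hcomm, add_smul, mul_smul, smul_assoc, mul_smul,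
      hn, add_comm n, pow_add_smul hn]
    simp
  | mul a b ha hb => simpa only [mul_smul] using ha (hb hm)
  | add a b ha hb =>
    obtain ⟨n₁, hn₁⟩ := ha hm
    obtain ⟨n₂, hn₂⟩ := hb hm
    refine ⟨n₁ + n₂, ?_⟩
    rw [add_smul, smul_add, pow_add_smul hn₂, add_comm n₁, pow_add_smul hn₁, add_zero]

end UniversalEnvelopingAlgebra

theorem Module.Basis.map_lie_of_map_lie_basis {ι R L A : Type*} [CommRing R] [LieRing L]
    [LieAlgebra R L] [LieRing A] [LieAlgebra R A] (b : Module.Basis ι R L) (f : L →ₗ[R] A)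
    (h : ∀ i j, f ⁅b i, b j⁆ = ⁅f (b i), f (b j)⁆) (x y : L) : f ⁅x, y⁆ = ⁅f x, f y⁆ := by
  have := LinearMap.ext_basis (B := (LieAlgebra.ad R L : L →ₗ[R] Module.End R L).compr₂ f)
    (B' := ((LieAlgebra.ad R A : A →ₗ[R] Module.End R A) ∘ₗ f).compl₂ f) b b (by simpa using h)
  simpa using LinearMap.congr_fun₂ this x y

theorem Module.Basis.lie_mem_of_lie_basis_mem {ι R L : Type*} [CommRing R] [LieRing L]
    [LieAlgebra R L] (b : Module.Basis ι R L) {N : Submodule R L}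
    (h : ∀ i j, ⁅b i, b j⁆ ∈ N) (x y : L) : ⁅x, y⁆ ∈ N := by
  have := LinearMap.ext_basis (B := (LieAlgebra.ad R L : L →ₗ[R] Module.End R L).compr₂ N.mkQ)
    (B' := 0) b b (by simpa [Submodule.Quotient.mk_eq_zero] using h)
  simpa [Submodule.Quotient.mk_eq_zero] using LinearMap.congr_fun₂ this x y

namespace MvPolynomial

variable {σ R : Type*} [CommRing R]

theorem lie_pderiv_pderiv (i j : σ) :
    ⁅(pderiv (R := R) i).toLinearMap, (pderiv (R := R) j).toLinearMap⁆ = 0 := by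
  classical
  have : ⁅pderiv (R := R) i, pderiv (R := R) j⁆ = 0 := derivation_ext fun k ↦ by
    simp [Derivation.commutator_apply, pderiv_X, Pi.single_apply, apply_ite]
  rw [← Derivation.commutator_coe_linear_map, this]
  rfl

theorem lie_pderiv_mulLeft_X [DecidableEq σ] (i j : σ) :
    ⁅(pderiv (R := R) i).toLinearMap, LinearMap.mulLeft R (X (R := R) j)⁆ =
      if i = j then 1 else 0 := by
  refine LinearMap.ext fun f ↦ ?_
  split_ifs with h <;> simp [Ring.lie_def, Derivation.leibniz, pderiv_X, h]

theorem lie_mulLeft_X_mulLeft_X (i j : σ) :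
    ⁅LinearMap.mulLeft R (X (R := R) i), LinearMap.mulLeft R (X (R := R) j)⁆ = 0 := by
  refine LinearMap.ext fun f ↦ ?_
  simp [Ring.lie_def, mul_left_comm]

end MvPolynomial

namespace HeisenbergL

theorem lie_mem_span_c (E : HeisenbergL d L) (x y : L) : ⁅x, y⁆ ∈ ℂ ∙ E.c := by
  refine E.basis.lie_mem_of_lie_basis_mem (fun i j ↦ ?_) x y
  rcases i with _ | p
  · rw [E.basis_none, E.lie_c]; exact zero_mem _
  rcases j with _ | q
  · rw [E.basis_none, ← lie_skew, E.lie_c, neg_zero]; exact zero_mem _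
  obtain ⟨hp₀, hp₁, hp₂⟩ := p.2
  obtain ⟨hq₀, hq₁, hq₂⟩ := q.2
  rw [E.basis_some, E.basis_some, E.lie_x_x _ _ _ _ hp₀ hq₀ hp₁ hp₂ hq₁ hq₂]
  split_ifs
  exacts [Submodule.smul_mem _ _ (Submodule.mem_span_singleton_self _), zero_mem _]

theorem lie_lie_eq_zero (E : HeisenbergL d L) (x y z : L) : ⁅x, ⁅y, z⁆⁆ = 0 := by
  obtain ⟨t, ht⟩ := Submodule.mem_span_singleton.mp (E.lie_mem_span_c y z)
  rw [← ht, lie_smul, ← lie_skew, E.lie_c, neg_zero, smul_zero]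

end HeisenbergL

theorem mem_posIdx_iff_notMem_of_fst_eq_neg {φ : ℕ → Bool} {p q : ℤ × ℕ}
    (hp : p.1 ≠ 0 ∧ 1 ≤ p.2 ∧ p.2 ≤ d p.1.natAbs) (hq : q.1 ≠ 0 ∧ 1 ≤ q.2 ∧ q.2 ≤ d q.1.natAbs)
    (h : p.1 = -q.1) : p ∈ posIdx d φ ↔ q ∉ posIdx d φ := by
  simp only [posIdx, Set.mem_ofPred_eq, h, Int.natAbs_neg] at hp ⊢
  cases φ q.1.natAbs <;> simp <;> omega

theorem exists_mem_posIdx_notMem_posIdx (hd : ∀ k, 1 ≤ d k) {φ₁ φ₂ : ℕ → Bool}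
    (hφ : ∃ k : ℕ, 1 ≤ k ∧ φ₁ k ≠ φ₂ k) :
    ∃ ε : ℤ, ((ε, 1) : ℤ × ℕ) ∈ posIdx d φ₁ ∧ ((ε, 1) : ℤ × ℕ) ∉ posIdx d φ₂ := by
  obtain ⟨k, hk, hφk⟩ := hφ
  have := hd k
  refine ⟨if φ₁ k then k else -k, ?_, ?_⟩ <;>
    cases h₁ : φ₁ k <;> cases h₂ : φ₂ k <;> simp_all [posIdx] <;> omega

section Fock

open MvPolynomial

local notation "𝔽" => Module.End ℂ (MvPolynomial (ℤ × ℕ) ℂ)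

/- The Fock realization: `x_p` with `p ∉ P` multiplies by the variable `X_p`, and `x_p` with
`p ∈ P` acts by `p.1 a ∂/∂X_{(-p.1, p.2)}`, so the Weyl relations `[∂_i, X_j] = δ_{ij}` become
the Heisenberg relations with `c = a`. -/
open Classical in
noncomputable def fockOp (P : Set (ℤ × ℕ)) (a : ℂ) (p : ℤ × ℕ) : 𝔽 :=
  if p ∈ P then ((p.1 : ℂ) * a) • (pderiv (-p.1, p.2)).toLinearMap else LinearMap.mulLeft ℂ (X p)

theorem lie_fockOp {P : Set (ℤ × ℕ)} (a : ℂ) {p q : ℤ × ℕ}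
    (hP : p.1 = -q.1 → (p ∈ P ↔ q ∉ P)) :
    ⁅fockOp P a p, fockOp P a q⁆ = if p.1 = -q.1 ∧ p.2 = q.2 then ((p.1 : ℂ) * a) • 1 else 0 := by
  classical
  have hpq : (-p.1, p.2) = q ↔ p.1 = -q.1 ∧ p.2 = q.2 := by rw [Prod.ext_iff]; omega
  have hqp : (-q.1, q.2) = p ↔ p.1 = -q.1 ∧ p.2 = q.2 := by rw [Prod.ext_iff]; omega
  by_cases hp : p ∈ P <;> by_cases hq : q ∈ P <;> simp only [fockOp, hp, hq, if_true, if_false]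
  · rw [if_neg (fun h ↦ (hP h.1).1 hp hq), smul_lie (L := 𝔽), lie_smul (L := 𝔽) (M := 𝔽),
      lie_pderiv_pderiv, smul_zero, smul_zero]
  · rw [smul_lie (L := 𝔽), lie_pderiv_mulLeft_X]
    simp only [hpq]
    split_ifs <;> simp
  · rw [lie_smul (L := 𝔽) (M := 𝔽), ← lie_skew, lie_pderiv_mulLeft_X]
    simp only [hqp]
    split_ifs with h
    · rw [h.1, Int.cast_neg, neg_mul]
      exact (smul_neg _ _).trans (neg_smul _ _).symm
    · simp
  · rw [if_neg (fun h ↦ hp ((hP h.1).2 hq)), lie_mulLeft_X_mulLeft_X]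

noncomputable def fockRep (E : HeisenbergL d L) (φ : ℕ → Bool) (a : ℂ) : L →ₗ[ℂ] 𝔽 :=
  E.basis.constr ℂ fun o ↦ o.elim (a • 1) fun p ↦ fockOp (posIdx d φ) a p

theorem fockRep_c (E : HeisenbergL d L) (φ : ℕ → Bool) (a : ℂ) : fockRep E φ a E.c = a • 1 := by
  rw [← E.basis_none, fockRep, Module.Basis.constr_basis]
  rfl

theorem fockRep_x (E : HeisenbergL d L) (φ : ℕ → Bool) (a : ℂ) {p : ℤ × ℕ}
    (hp : p.1 ≠ 0 ∧ 1 ≤ p.2 ∧ p.2 ≤ d p.1.natAbs) :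
    fockRep E φ a (E.x p.1 p.2) = fockOp (posIdx d φ) a p := by
  rw [← E.basis_some ⟨p, hp⟩, fockRep, Module.Basis.constr_basis]
  rfl

theorem fockRep_lie (E : HeisenbergL d L) (φ : ℕ → Bool) (a : ℂ) (x y : L) :
    fockRep E φ a ⁅x, y⁆ = ⁅fockRep E φ a x, fockRep E φ a y⁆ := by
  have lie_scalar : ∀ B : 𝔽, ⁅a • (1 : 𝔽), B⁆ = 0 :=
    fun B ↦ ((Commute.one_left B).smul_left a).lie_eq
  refine E.basis.map_lie_of_map_lie_basis _ (fun i j ↦ ?_) x y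
  rcases i with _ | p
  · rw [E.basis_none, E.lie_c, map_zero, fockRep_c, lie_scalar]
  rcases j with _ | q
  · rw [E.basis_none, ← lie_skew, E.lie_c, neg_zero, map_zero, fockRep_c, ← lie_skew,
      lie_scalar, neg_zero]
  obtain ⟨hp₀, hp₁, hp₂⟩ := p.2
  obtain ⟨hq₀, hq₁, hq₂⟩ := q.2
  rw [E.basis_some, E.basis_some, E.lie_x_x _ _ _ _ hp₀ hq₀ hp₁ hp₂ hq₁ hq₂, fockRep_x _ _ _ p.2,
    fockRep_x _ _ _ q.2, lie_fockOp a (mem_posIdx_iff_notMem_of_fst_eq_neg p.2 q.2)]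
  split_ifs
  · rw [map_smul, fockRep_c, smul_smul]
  · exact map_zero _

noncomputable def fockAlgHom (E : HeisenbergL d L) (φ : ℕ → Bool) (a : ℂ) :
    UniversalEnvelopingAlgebra ℂ L →ₐ[ℂ] 𝔽 :=
  lift ℂ { fockRep E φ a with map_lie' := fockRep_lie E φ a _ _ }

theorem fockAlgHom_ι (E : HeisenbergL d L) (φ : ℕ → Bool) (a : ℂ) (x : L) :
    fockAlgHom E φ a (ι ℂ x) = fockRep E φ a x := by
  rw [fockAlgHom, lift_ι_apply]
  rfl

theorem fockAlgHom_apply_one_of_mem_vermaIdeal (E : HeisenbergL d L) (φ : ℕ → Bool) (a : ℂ)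
    {z : UniversalEnvelopingAlgebra ℂ L} (hz : z ∈ vermaIdeal E φ a) :
    fockAlgHom E φ a z 1 = 0 := by
  induction hz using Submodule.span_induction with
  | mem w hw =>
    rcases hw with rfl | ⟨p, hp, rfl⟩
    · rw [map_sub, AlgHom.commutes, fockAlgHom_ι, fockRep_c]
      simp [Algebra.algebraMap_eq_smul_one]
    · rw [fockAlgHom_ι, fockRep_x _ _ _ ⟨hp.1, hp.2.1, hp.2.2.1⟩, fockOp, if_pos hp]
      simp
  | zero => simp
  | add w₁ w₂ _ _ h₁ h₂ => simp [h₁, h₂]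
  | smul r w _ h => simp [h]

theorem ι_pow_notMem_vermaIdeal (E : HeisenbergL d L) {φ : ℕ → Bool} (a : ℂ) {p : ℤ × ℕ}
    (hp : p.1 ≠ 0 ∧ 1 ≤ p.2 ∧ p.2 ≤ d p.1.natAbs) (hpφ : p ∉ posIdx d φ) (n : ℕ) :
    ι ℂ (E.x p.1 p.2) ^ n ∉ vermaIdeal E φ a := by
  intro h
  have := fockAlgHom_apply_one_of_mem_vermaIdeal E φ a h
  rw [map_pow, fockAlgHom_ι, fockRep_x E φ a hp, fockOp, if_neg hpφ, LinearMap.pow_mulLeft,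
    LinearMap.mulLeft_apply, mul_one] at this
  exact pow_ne_zero n (X_ne_zero p) this

end Fock

namespace VermaMod

noncomputable def v (E : HeisenbergL d L) (φ : ℕ → Bool) (a : ℂ) : VermaMod E φ a :=
  Submodule.Quotient.mk (p := vermaIdeal E φ a) 1

theorem smul_v (E : HeisenbergL d L) (φ : ℕ → Bool) (a : ℂ)
    (z : UniversalEnvelopingAlgebra ℂ L) :
    z • v E φ a =
      (Submodule.Quotient.mk z : UniversalEnvelopingAlgebra ℂ L ⧸ vermaIdeal E φ a) := by
  change z • (Submodule.Quotient.mk 1 : UniversalEnvelopingAlgebra ℂ L ⧸ vermaIdeal E φ a) = _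
  rw [← Submodule.Quotient.mk_smul, smul_eq_mul, mul_one]

theorem smul_v_eq_zero_iff (E : HeisenbergL d L) (φ : ℕ → Bool) (a : ℂ)
    (z : UniversalEnvelopingAlgebra ℂ L) : z • v E φ a = 0 ↔ z ∈ vermaIdeal E φ a := by
  rw [smul_v]
  exact Submodule.Quotient.mk_eq_zero _

theorem exists_eq_smul_v (E : HeisenbergL d L) (φ : ℕ → Bool) (a : ℂ) (m : VermaMod E φ a) :
    ∃ w : UniversalEnvelopingAlgebra ℂ L, m = w • v E φ a := by
  obtain ⟨w, rfl⟩ := Submodule.Quotient.mk_surjective _ m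
  exact ⟨w, (smul_v E φ a w).symm⟩

theorem exists_pow_smul_eq_zero (E : HeisenbergL d L) {φ : ℕ → Bool} (a : ℂ)
    {p : ℤ × ℕ} (hp : p ∈ posIdx d φ) (m : VermaMod E φ a) :
    ∃ n, ι ℂ (E.x p.1 p.2) ^ n • m = 0 := by
  obtain ⟨w, rfl⟩ := exists_eq_smul_v E φ a m
  refine UniversalEnvelopingAlgebra.exists_pow_smul_eq_zero_smul
    (fun y ↦ E.lie_lie_eq_zero _ _ y) w ⟨1, ?_⟩
  rw [pow_one, smul_v_eq_zero_iff]
  exact Submodule.subset_span (Or.inr ⟨p, hp, rfl⟩)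

end VermaMod

/-- if φ₁ ≠ φ₂ (as functions on the positive integers), then `M_{φ₁}(a)` and
`M_{φ₂}(a)` are not isomorphic as `L`-modules (equivalently, as `U(L)`-modules). -/
theorem stmt_2 (d : ℕ → ℕ) (hd : ∀ k, 1 ≤ d k) (L : Type) [LieRing L] [LieAlgebra ℂ L]
    (E : HeisenbergL d L) (a : ℂ) (φ₁ φ₂ : ℕ → Bool)
    (hφ : ∃ k : ℕ, 1 ≤ k ∧ φ₁ k ≠ φ₂ k) :
    ¬ Nonempty ((VermaMod E φ₁ a) ≃ₗ[UniversalEnvelopingAlgebra ℂ L] (VermaMod E φ₂ a)) := by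
  rintro ⟨f⟩
  obtain ⟨ε, h₁, h₂⟩ := exists_mem_posIdx_notMem_posIdx hd hφ
  obtain ⟨n, hn⟩ := VermaMod.exists_pow_smul_eq_zero E a h₁ (f.symm (VermaMod.v E φ₂ a))
  refine ι_pow_notMem_vermaIdeal E a ⟨h₁.1, h₁.2.1, h₁.2.2.1⟩ h₂ n
    ((VermaMod.smul_v_eq_zero_iff E φ₂ a _).mp ?_)
  simpa only [map_smul, LinearEquiv.apply_symm_apply, map_zero] using congrArg f hn
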